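/- arXiv:1711.11392 — 5 statements merged into one kernel-verified Lean document; each statement's English description precedes it below -/
import Mathlib

section
/- For every real c > 0, the inequality √(π/(2c)) − e^{−c} ≥ √(2/(3c)) holds. -/
/-- for every real `c > 0`, `√(π/(2c)) − e^{−c} ≥ √(2/(3c))`. -/
theorem statement5 (c : ℝ) (hc : 0 < c) :
    Real.sqrt (2 / (3 * c)) ≤ Real.sqrt (Real.pi / (2 * c)) - Real.exp (-c) := by
  have hpi := Real.pi_gt_d6
  have he := Real.exp_one_gt_d9
  have he0 : (0:ℝ) < Real.exp 1 := Real.exp_pos 1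
  -- split sqrt
  have h1 : Real.pi / (2 * c) = (Real.pi / 2) * (1 / c) := by ring
  have h2 : (2:ℝ) / (3 * c) = (2 / 3) * (1 / c) := by ring
  rw [h1, h2, Real.sqrt_mul (div_nonneg Real.pi_pos.le (by norm_num)), Real.sqrt_mul (by norm_num)]
  -- key exponential bound: exp(-c)^2 * c ≤ 1/(2e)
  have hkey : Real.exp (-c) ^ 2 * c ≤ 1 / (2 * Real.exp 1) := by
    have h3 : 2 * c ≤ Real.exp (2 * c - 1) := by
      have := Real.add_one_le_exp (2 * c - 1); linarith
    have h4 : Real.exp (-c) ^ 2 * Real.exp (2 * c - 1) = Real.exp (-1) := by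
      rw [sq, ← Real.exp_add, ← Real.exp_add]; ring_nf
    have h5 : Real.exp (-1) * Real.exp 1 = 1 := by
      rw [← Real.exp_add]; norm_num
    have h6 : Real.exp (-c) ^ 2 * (2 * c) ≤ Real.exp (-1) := by
      calc Real.exp (-c) ^ 2 * (2 * c) ≤ Real.exp (-c) ^ 2 * Real.exp (2 * c - 1) := by
            exact mul_le_mul_of_nonneg_left h3 (by positivity)
        _ = Real.exp (-1) := h4
    rw [le_div_iff₀ (by positivity)]
    nlinarith [h6, he0]
  -- hence exp(-c) ≤ √(1/(2e)) * √(1/c)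
  have hexp : Real.exp (-c) ≤ Real.sqrt (1 / (2 * Real.exp 1)) * Real.sqrt (1 / c) := by
    rw [← Real.sqrt_mul (by positivity)]
    have : Real.exp (-c) = Real.sqrt (Real.exp (-c) ^ 2) :=
      (Real.sqrt_sq (Real.exp_pos _).le).symm
    rw [this]
    apply Real.sqrt_le_sqrt
    rw [mul_one_div, le_div_iff₀ hc]
    exact hkey
  -- numeric: √(1/(2e)) + √(2/3) ≤ √(π/2)
  have hs1 : Real.sqrt (1 / (2 * Real.exp 1)) ≤ 0.4304 := by
    rw [Real.sqrt_le_iff]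
    constructor
    · norm_num
    · rw [div_le_iff₀ (by positivity)]
      nlinarith [he]
  have hs2 : Real.sqrt (2 / 3 : ℝ) ≤ 0.8165 := by
    rw [Real.sqrt_le_iff]
    norm_num
  have hs3 : (1.2532 : ℝ) ≤ Real.sqrt (Real.pi / 2) := by
    rw [Real.le_sqrt (by norm_num) (by positivity)]
    nlinarith [hpi]
  have hD : Real.sqrt (1 / (2 * Real.exp 1)) ≤ Real.sqrt (Real.pi / 2) - Real.sqrt (2 / 3 : ℝ) := by
    linarith
  have hc1 : (0:ℝ) ≤ Real.sqrt (1 / c) := Real.sqrt_nonneg _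
  nlinarith [mul_le_mul_of_nonneg_right hD hc1, hexp]
end

section
/- For every real c > 0, the series ∑_{n=1}^∞ P_n(c) converges and 1 + ∑_{n=1}^∞ P_n(c) ≥ √(2/(3c)). -/
/-!
Since `1 / P_n(c) = ∏ (1 + j c) ≤ exp (c n (n + 1) / 2) ≤ exp (c (n + 1/2)² / 2)`, the series
`∑_{n ≥ 0} P_n(c)` dominates a sum of Gaussian values at the points `n + 1/2`. Comparing with the
integral of the decreasing Gaussian gives `∑_{n ≥ 0} P_n(c) ≥ √(π / (2c)) - 1/2`, which is at
least `√(2 / (3c))` for `c ≤ 2/3` because `π ≥ 3`; for `c > 2/3` the term `P_0(c) = 1` suffices.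
-/

open Real MeasureTheory Set Filter Topology

/-- Partial product `P n c = ∏_{j=1}^{n} 1/(1 + j·c)`, with `P 0 c = 1`. -/
noncomputable def partialProd (n : ℕ) (c : ℝ) : ℝ :=
  ∏ j ∈ Finset.Icc 1 n, (1 + (j : ℝ) * c)⁻¹

lemma sum_Icc_one_natCast (n : ℕ) : ∑ j ∈ Finset.Icc 1 n, (j : ℝ) = n * (n + 1) / 2 := by
  induction n with
  | zero => simp
  | succ n ih =>
    rw [Finset.sum_Icc_succ_top (by omega), ih]
    push_cast
    ring

lemma AntitoneOn.integral_Ioi_le_tsum {f : ℝ → ℝ} {a : ℝ} (anti : AntitoneOn f (Ici a))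
    (integrable : IntegrableOn f (Ioi a)) (summable : Summable fun n : ℕ => f (a + n))
    (nonneg : ∀ n : ℕ, 0 ≤ f (a + n)) :
    ∫ x in Ioi a, f x ≤ ∑' n : ℕ, f (a + n) := by
  have hlim : Tendsto (fun N : ℕ => ∫ x in a..a + N, f x) atTop (𝓝 (∫ x in Ioi a, f x)) :=
    intervalIntegral_tendsto_integral_Ioi a integrable
      (tendsto_atTop_add_const_left _ a tendsto_natCast_atTop_atTop)
  refine le_of_tendsto' hlim fun N => ?_
  calc ∫ x in a..a + N, f x ≤ ∑ i ∈ Finset.range N, f (a + i) :=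
        (anti.mono Icc_subset_Ici_self).integral_le_sum
    _ ≤ ∑' n : ℕ, f (a + n) := summable.sum_le_tsum _ fun n _ => nonneg n

lemma antitoneOn_exp_neg_mul_sq {b : ℝ} (hb : 0 ≤ b) :
    AntitoneOn (fun x : ℝ => exp (-b * x ^ 2)) (Ici 0) := by
  intro x hx y _ hxy
  have : x ^ 2 ≤ y ^ 2 := pow_le_pow_left₀ hx hxy 2
  exact exp_le_exp.mpr (by nlinarith)

lemma sqrt_pi_div_two_sub_le_integral_gaussian_Ioi {a b : ℝ} (ha : 0 ≤ a) (hb : 0 < b) :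
    √(π / b) / 2 - a ≤ ∫ x in Ioi a, exp (-b * x ^ 2) := by
  have hint := integrable_exp_neg_mul_sq hb
  have hsplit : ∫ x in Ioi 0, exp (-b * x ^ 2)
      = (∫ x in Ioc 0 a, exp (-b * x ^ 2)) + ∫ x in Ioi a, exp (-b * x ^ 2) := by
    rw [← setIntegral_union (Ioc_disjoint_Ioi le_rfl) measurableSet_Ioi hint.integrableOn
      hint.integrableOn, Ioc_union_Ioi_eq_Ioi ha]
  have hhead : ∫ x in Ioc 0 a, exp (-b * x ^ 2) ≤ a := by
    calc ∫ x in Ioc 0 a, exp (-b * x ^ 2) ≤ ∫ _ in Ioc 0 a, (1 : ℝ) :=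
          setIntegral_mono_on hint.integrableOn (integrableOn_const (by simp)) measurableSet_Ioc
            fun x _ => exp_le_one_iff.mpr (by nlinarith [sq_nonneg x])
      _ = a := by simp [ha]
  rw [integral_gaussian_Ioi] at hsplit
  linarith

section partialProd

variable {c : ℝ}

lemma partialProd_pos (hc : 0 ≤ c) (n : ℕ) : 0 < partialProd n c :=
  Finset.prod_pos fun j _ => by positivity

lemma partialProd_le_pow (hc : 0 ≤ c) (n : ℕ) : partialProd n c ≤ (1 + c)⁻¹ ^ n := by
  calc partialProd n c ≤ ∏ _j ∈ Finset.Icc 1 n, (1 + c)⁻¹ := by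
        refine Finset.prod_le_prod (fun j _ => by positivity) fun j hj => ?_
        have hj : (1 : ℝ) ≤ j := by exact_mod_cast (Finset.mem_Icc.mp hj).1
        gcongr
        nlinarith
    _ = (1 + c)⁻¹ ^ n := by simp

lemma summable_partialProd (hc : 0 < c) : Summable (partialProd · c) :=
  (summable_geometric_of_lt_one (by positivity) (inv_lt_one_of_one_lt₀ (by linarith)))
    |>.of_nonneg_of_le (fun n => (partialProd_pos hc.le n).le) (partialProd_le_pow hc.le)

lemma exp_neg_le_partialProd (hc : 0 ≤ c) (n : ℕ) :
    exp (-(c * (n * (n + 1) / 2))) ≤ partialProd n c := by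
  have hprod : ∏ j ∈ Finset.Icc 1 n, (1 + (j : ℝ) * c) ≤ exp (c * (n * (n + 1) / 2)) :=
    calc ∏ j ∈ Finset.Icc 1 n, (1 + (j : ℝ) * c) ≤ exp (∑ j ∈ Finset.Icc 1 n, (j : ℝ) * c) :=
          prod_one_add_le_exp_sum _ fun j => by positivity
      _ = exp (c * (n * (n + 1) / 2)) := by
          rw [← Finset.sum_mul, sum_Icc_one_natCast, mul_comm]
  rw [exp_neg, partialProd, Finset.prod_inv_distrib]
  exact inv_anti₀ (Finset.prod_pos fun j _ => by positivity) hprod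

lemma exp_neg_mul_sq_le_partialProd (hc : 0 ≤ c) (n : ℕ) :
    exp (-(c / 2) * (1 / 2 + n) ^ 2) ≤ partialProd n c :=
  (exp_le_exp.mpr (by nlinarith)).trans (exp_neg_le_partialProd hc n)

lemma integral_gaussian_Ioi_half_le_tsum_partialProd (hc : 0 < c) :
    ∫ x in Ioi (1 / 2), exp (-(c / 2) * x ^ 2) ≤ ∑' n, partialProd n c := by
  have hgauss_nonneg : ∀ n : ℕ, 0 ≤ exp (-(c / 2) * (1 / 2 + n) ^ 2) := fun n => (exp_pos _).le
  have hgauss_summable : Summable fun n : ℕ => exp (-(c / 2) * (1 / 2 + n) ^ 2) :=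
    (summable_partialProd hc).of_nonneg_of_le hgauss_nonneg
      (exp_neg_mul_sq_le_partialProd hc.le)
  have hanti : AntitoneOn (fun x : ℝ => exp (-(c / 2) * x ^ 2)) (Ici (1 / 2)) :=
    (antitoneOn_exp_neg_mul_sq (by positivity)).mono (Ici_subset_Ici.mpr (by norm_num))
  calc ∫ x in Ioi (1 / 2), exp (-(c / 2) * x ^ 2)
      ≤ ∑' n : ℕ, exp (-(c / 2) * (1 / 2 + n) ^ 2) :=
        hanti.integral_Ioi_le_tsum (integrable_exp_neg_mul_sq (by positivity)).integrableOn
          hgauss_summable hgauss_nonneg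
    _ ≤ ∑' n, partialProd n c :=
        hgauss_summable.tsum_le_tsum (exp_neg_mul_sq_le_partialProd hc.le) (summable_partialProd hc)

end partialProd

lemma sqrt_two_div_three_mul_add_half_le {c : ℝ} (hc : 0 < c) (hc' : c ≤ 2 / 3) :
    √(2 / (3 * c)) + 1 / 2 ≤ √(π / (c / 2)) / 2 := by
  have hs : 0 < √c := sqrt_pos.mpr hc
  have h9 : √(9 * c) = 3 * √c := by
    rw [sqrt_mul (by norm_num), show (9 : ℝ) = 3 ^ 2 by norm_num, sqrt_sq (by norm_num)]
  have hlhs : √(2 / (3 * c)) = √6 / (3 * √c) := by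
    rw [show 2 / (3 * c) = 6 / (9 * c) by field_simp; ring, sqrt_div (by norm_num), h9]
  have hrhs : √(π / (c / 2)) = √(2 * π) / √c := by
    rw [show π / (c / 2) = 2 * π / c by field_simp, sqrt_div (by positivity)]
  have hsc : 3 * √c ≤ √6 := h9 ▸ sqrt_le_sqrt (by linarith)
  have hpi : √6 ≤ √(2 * π) := sqrt_le_sqrt (by linarith [pi_gt_three])
  have key : 2 * √6 + 3 * √c ≤ 3 * √(2 * π) := by linarith
  rw [hlhs, hrhs, div_add' _ _ _ (by positivity), div_div,
    div_le_div_iff₀ (by positivity) (by positivity)]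
  nlinarith [mul_le_mul_of_nonneg_left key hs.le]

/-- for every real `c > 0`, the series `∑_{n=1}^∞ P_n(c)` converges
and `1 + ∑_{n=1}^∞ P_n(c) ≥ √(2/(3c))`. -/
theorem statement6 (c : ℝ) (hc : 0 < c) :
    Summable (fun n : ℕ => partialProd (n + 1) c) ∧
      Real.sqrt (2 / (3 * c)) ≤ 1 + ∑' n : ℕ, partialProd (n + 1) c := by
  have hsum := summable_partialProd hc
  refine ⟨(summable_nat_add_iff (f := (partialProd · c)) 1).mpr hsum, ?_⟩
  have htsum : 1 + ∑' n : ℕ, partialProd (n + 1) c = ∑' n, partialProd n c := by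
    rw [hsum.tsum_eq_zero_add]
    simp [partialProd]
  rw [htsum]
  rcases le_or_gt c (2 / 3) with hsmall | hlarge
  · calc √(2 / (3 * c)) ≤ √(π / (c / 2)) / 2 - 1 / 2 := by
          linarith [sqrt_two_div_three_mul_add_half_le hc hsmall]
      _ ≤ ∫ x in Ioi (1 / 2), exp (-(c / 2) * x ^ 2) :=
          sqrt_pi_div_two_sub_le_integral_gaussian_Ioi (by norm_num) (by positivity)
      _ ≤ ∑' n, partialProd n c := integral_gaussian_Ioi_half_le_tsum_partialProd hc
  · calc √(2 / (3 * c)) ≤ 1 := sqrt_le_one.mpr ((div_le_one (by positivity)).mpr (by linarith))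
      _ = partialProd 0 c := by simp [partialProd]
      _ ≤ ∑' n, partialProd n c :=
          hsum.le_tsum 0 fun n _ => (partialProd_pos hc.le n).le
end

section
/- For every real c with 0 < c ≤ 1, the series ∑_{n=0}^∞ P_n(c) converges and its sum is at most 7/(2·√c). -/
section Tail

variable {f : ℕ → ℝ} {r : ℝ} (m : ℕ)

theorem summable_of_geometric_tail (hf : ∀ n, 0 ≤ f n) (hr0 : 0 ≤ r) (hr1 : r < 1)
    (htail : ∀ k, f (k + m) ≤ r ^ k) : Summable f :=
  (summable_nat_add_iff m).mp <|
    (summable_geometric_of_lt_one hr0 hr1).of_nonneg_of_le (fun _ ↦ hf _) htail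

theorem tsum_le_of_geometric_tail (hf : ∀ n, 0 ≤ f n) (hf1 : ∀ n, f n ≤ 1) (hr0 : 0 ≤ r)
    (hr1 : r < 1) (htail : ∀ k, f (k + m) ≤ r ^ k) : ∑' n, f n ≤ m + (1 - r)⁻¹ := by
  have hsum := summable_of_geometric_tail m hf hr0 hr1 htail
  rw [← hsum.sum_add_tsum_nat_add m]
  have hhead : ∑ i ∈ Finset.range m, f i ≤ m := by
    simpa using Finset.sum_le_sum fun i (_ : i ∈ Finset.range m) ↦ hf1 i
  have htail_sum : ∑' k, f (k + m) ≤ (1 - r)⁻¹ := by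
    rw [← tsum_geometric_of_lt_one hr0 hr1]
    exact ((summable_nat_add_iff m).mpr hsum).tsum_le_tsum htail
      (summable_geometric_of_lt_one hr0 hr1)
  linarith

end Tail

section PartialProd

variable {c : ℝ} (hc : 0 ≤ c)
include hc

theorem partialProd_nonneg (n : ℕ) : 0 ≤ partialProd n c :=
  Finset.prod_nonneg fun j _ ↦ by positivity

theorem partialProd_le_one (n : ℕ) : partialProd n c ≤ 1 :=
  Finset.prod_le_one (fun j _ ↦ by positivity) fun j _ ↦
    inv_le_one_of_one_le₀ (le_add_of_nonneg_right (by positivity))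

omit hc in
theorem partialProd_succ (n : ℕ) :
    partialProd (n + 1) c = partialProd n c * (1 + ((n + 1 : ℕ) : ℝ) * c)⁻¹ :=
  Finset.prod_Icc_succ_top (Nat.le_add_left 1 n) _

theorem partialProd_add_le (m k : ℕ) :
    partialProd (k + m) c ≤ (1 + ((m + 1 : ℕ) : ℝ) * c)⁻¹ ^ k := by
  induction k with
  | zero => simpa using partialProd_le_one hc m
  | succ k ih =>
    rw [Nat.add_right_comm, partialProd_succ, pow_succ]
    gcongr
    omega

end PartialProd

/-- for every real `c` with `0 < c ≤ 1`, the series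
`∑_{n=0}^∞ P_n(c)` converges and its sum is at most `7/(2·√c)`. -/
theorem statement11 (c : ℝ) (hc0 : 0 < c) (hc1 : c ≤ 1) :
    Summable (fun n : ℕ => partialProd n c) ∧
      (∑' n : ℕ, partialProd n c) ≤ 7 / (2 * Real.sqrt c) := by
  set s := Real.sqrt c
  have hs0 : 0 < s := Real.sqrt_pos.mpr hc0
  have hs1 : 1 ≤ 1 / s := one_le_one_div hs0 (Real.sqrt_le_one.mpr hc1)
  set m := ⌊1 / s⌋₊
  have hm : (m : ℝ) ≤ 1 / s := Nat.floor_le (one_div_nonneg.mpr hs0.le)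
  have hstep : s ≤ ((m + 1 : ℕ) : ℝ) * c := by
    have : 1 / s * c = s := by field_simp; exact (Real.sq_sqrt hc0.le).symm
    push_cast
    nlinarith [Nat.lt_floor_add_one (1 / s)]
  have htail (k : ℕ) : partialProd (k + m) c ≤ (1 + s)⁻¹ ^ k :=
    (partialProd_add_le hc0.le m k).trans (by gcongr)
  have hr0 : 0 ≤ (1 + s)⁻¹ := by positivity
  have hr1 : (1 + s)⁻¹ < 1 := inv_lt_one_of_one_lt₀ (by linarith)
  have hgeom : (1 - (1 + s)⁻¹)⁻¹ = 1 + 1 / s := by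
    field_simp
    rw [add_sub_cancel_left]
    field_simp
    ring
  refine ⟨summable_of_geometric_tail m (partialProd_nonneg hc0.le) hr0 hr1 htail, ?_⟩
  calc ∑' n, partialProd n c
      ≤ m + (1 - (1 + s)⁻¹)⁻¹ :=
        tsum_le_of_geometric_tail m (partialProd_nonneg hc0.le) (partialProd_le_one hc0.le)
          hr0 hr1 htail
    _ ≤ 7 / (2 * s) := by rw [hgeom, show 7 / (2 * s) = 7 / 2 * (1 / s) by ring]; linarith
end

section
/- Let γ, κ, λ > 0 and set c = min(γ, κ)/λ. If c ≤ 1, then q₀(λ, γ, κ) ≥ √c / 7. Equivalently, in a balanced two-sided FIFO queue with arrival rate λ and abandonment rates γ, κ, the abandonment probability is at least (1/7)·√(min(γ,κ)/λ), so an abandonment probability of at most η forces λ ≥ min(γ,κ)/(49·η²). -/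
/-- The empty-queue (abandonment) probability of the balanced two-sided FIFO
queue: `q₀(λ, γ, κ) = (1 + ∑_{n=1}^∞ [P_n(γ/λ) + P_n(κ/λ)])⁻¹`. -/
noncomputable def q0 (lam gam kap : ℝ) : ℝ :=
  (1 + ∑' n : ℕ, (partialProd (n + 1) (gam / lam) + partialProd (n + 1) (kap / lam)))⁻¹

/-!
Once the index passes `N ≈ 1/√c`, every further factor of `P_n(c)` is at most `(1 + N c)⁻¹`,
so the series `∑ P_n(c)` is at most `N` (its first `N` terms are `≤ 1`) plus a geometric tail
of size `1/(N c)`, which gives `∑ P_n(c) ≤ 3/√c`. Since `P_n` is antitone in `c`, both series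
in `q₀` are bounded this way with `c = min(γ, κ)/λ`, so `1/q₀ ≤ 1 + 6/√c ≤ 7/√c`.
-/

open Finset

namespace partialProd

variable {c : ℝ}

lemma succ (n : ℕ) :
    partialProd (n + 1) c = partialProd n c * (1 + ((n + 1 : ℕ) : ℝ) * c)⁻¹ :=
  prod_Icc_succ_top (by omega) _

lemma nonneg (hc : 0 ≤ c) (n : ℕ) : 0 ≤ partialProd n c :=
  prod_nonneg fun _ _ => by positivity

lemma le_one (hc : 0 ≤ c) (n : ℕ) : partialProd n c ≤ 1 :=
  prod_le_one (fun _ _ => by positivity)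
    fun _ _ => inv_le_one_of_one_le₀ (le_add_of_nonneg_right (by positivity))

lemma antitone_param (hc : 0 ≤ c) {a : ℝ} (hca : c ≤ a) (n : ℕ) :
    partialProd n a ≤ partialProd n c :=
  prod_le_prod (fun _ _ => by have := hc.trans hca; positivity)
    fun _ _ => inv_anti₀ (by positivity) (by gcongr)

lemma add_le_pow (hc : 0 ≤ c) (N k : ℕ) :
    partialProd (N + k) c ≤ (1 + N * c)⁻¹ ^ k := by
  induction k with
  | zero => simpa using le_one hc N
  | succ k ih =>
    rw [← add_assoc, succ, pow_succ]
    refine mul_le_mul ih (inv_anti₀ (by positivity) ?_) (by positivity) (by positivity)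
    push_cast
    nlinarith

lemma summable_succ (hc : 0 < c) : Summable fun n => partialProd (n + 1) c := by
  have hr : (1 + c)⁻¹ < 1 := inv_lt_one_of_one_lt₀ (by linarith)
  refine (summable_geometric_of_lt_one (by positivity) hr).of_nonneg_of_le
    (fun n => nonneg hc.le _) fun n => ?_
  simpa [add_comm n 1] using add_le_pow hc.le 1 n

lemma tsum_succ_le (hc : 0 < c) {N : ℕ} (hN : 0 < N) :
    ∑' n, partialProd (n + 1) c ≤ N + (N * c)⁻¹ := by
  set r := (1 + N * c)⁻¹ with hr_def
  have hNc : 0 < (N : ℝ) * c := by positivity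
  have hr0 : 0 ≤ r := by positivity
  have hr1 : r < 1 := inv_lt_one_of_one_lt₀ (by linarith)
  have head : ∑ n ∈ range N, partialProd (n + 1) c ≤ N := by
    simpa using sum_le_card_nsmul (range N) _ 1 fun n _ => le_one hc.le (n + 1)
  have tail_le : ∀ n, partialProd (n + N + 1) c ≤ r ^ (n + 1) := fun n => by
    rw [show n + N + 1 = N + (n + 1) by omega]
    exact add_le_pow hc.le N (n + 1)
  have geom : HasSum (fun n => r ^ (n + 1)) (N * c)⁻¹ := by
    have hval : r * (1 - r)⁻¹ = (N * c)⁻¹ := by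
      rw [hr_def]
      field_simp
      ring
    simpa [pow_succ', hval] using (hasSum_geometric_of_lt_one hr0 hr1).mul_left r
  have tail : ∑' n, partialProd (n + N + 1) c ≤ (N * c)⁻¹ :=
    ((summable_nat_add_iff N).2 (summable_succ hc)).tsum_le_tsum tail_le geom.summable
      |>.trans_eq geom.tsum_eq
  rw [← (summable_succ hc).sum_add_tsum_nat_add N]
  exact add_le_add head tail

lemma tsum_succ_le_three_div_sqrt (hc : 0 < c) (hc1 : c ≤ 1) :
    ∑' n, partialProd (n + 1) c ≤ 3 / √c := by
  set s := √c
  have hs : 0 < s := Real.sqrt_pos.2 hc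
  have hs1 : s ≤ 1 := Real.sqrt_le_one.2 hc1
  have hc_eq : c = s * s := (Real.mul_self_sqrt hc.le).symm
  set N := ⌈s⁻¹⌉₊
  have hN_ge : s⁻¹ ≤ N := Nat.le_ceil _
  have hN_lt : (N : ℝ) < s⁻¹ + 1 := Nat.ceil_lt_add_one (by positivity)
  have hN : 0 < N := Nat.cast_pos.1 ((inv_pos.2 hs).trans_le hN_ge)
  have h_one : 1 ≤ s⁻¹ := one_le_inv₀ hs |>.2 hs1
  have h_inv : ((N : ℝ) * c)⁻¹ ≤ s⁻¹ := by
    refine inv_anti₀ hs ?_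
    calc s = s⁻¹ * c := by rw [hc_eq]; field_simp
      _ ≤ N * c := by gcongr
  calc ∑' n, partialProd (n + 1) c ≤ N + (N * c)⁻¹ := tsum_succ_le hc hN
    _ ≤ 2 * s⁻¹ + s⁻¹ := by gcongr; linarith
    _ = 3 / s := by ring

end partialProd

lemma sqrt_div_seven_le_q0 {lam gam kap c : ℝ} (hc : 0 < c) (hc1 : c ≤ 1)
    (hcg : c ≤ gam / lam) (hck : c ≤ kap / lam) : √c / 7 ≤ q0 lam gam kap := by
  have hg : 0 < gam / lam := hc.trans_le hcg
  have hk : 0 < kap / lam := hc.trans_le hck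
  have bound (a : ℝ) (ha : 0 < a) (hca : c ≤ a) : ∑' n, partialProd (n + 1) a ≤ 3 / √c :=
    calc ∑' n, partialProd (n + 1) a ≤ ∑' n, partialProd (n + 1) c :=
          (partialProd.summable_succ ha).tsum_le_tsum
            (fun n => partialProd.antitone_param hc.le hca (n + 1)) (partialProd.summable_succ hc)
      _ ≤ 3 / √c := partialProd.tsum_succ_le_three_div_sqrt hc hc1
  have hs : 0 < √c := Real.sqrt_pos.2 hc
  have h_one : 1 ≤ 1 / √c := by rw [le_div_iff₀ hs, one_mul]; exact Real.sqrt_le_one.2 hc1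
  have h_nonneg (a : ℝ) (ha : 0 < a) : 0 ≤ ∑' n, partialProd (n + 1) a :=
    tsum_nonneg fun n => partialProd.nonneg ha.le _
  rw [q0, (partialProd.summable_succ hg).tsum_add (partialProd.summable_succ hk), ← inv_div]
  refine inv_anti₀ (by linarith [h_nonneg _ hg, h_nonneg _ hk]) ?_
  linarith [bound _ hg hcg, bound _ hk hck, show 1 / √c + 3 / √c + 3 / √c = 7 / √c by ring]

/-- with `c = min(γ,κ)/λ ≤ 1`, the abandonment probability
satisfies `q₀(λ, γ, κ) ≥ √c / 7`; hence abandonment probability at most `η`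
forces `λ ≥ min(γ,κ)/(49·η²)`. -/
theorem statement12 (lam gam kap : ℝ) (hlam : 0 < lam) (hgam : 0 < gam) (hkap : 0 < kap)
    (hc : min gam kap / lam ≤ 1) :
    Real.sqrt (min gam kap / lam) / 7 ≤ q0 lam gam kap ∧
      (∀ η : ℝ, 0 < η → q0 lam gam kap ≤ η → min gam kap / (49 * η ^ 2) ≤ lam) := by
  have hc0 : 0 < min gam kap / lam := div_pos (lt_min hgam hkap) hlam
  have hq : √(min gam kap / lam) / 7 ≤ q0 lam gam kap :=
    sqrt_div_seven_le_q0 hc0 hc (div_le_div_of_nonneg_right (min_le_left _ _) hlam.le)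
      (div_le_div_of_nonneg_right (min_le_right _ _) hlam.le)
  refine ⟨hq, fun η hη hqη => ?_⟩
  have h_sqrt : √(min gam kap / lam) ≤ 7 * η := by linarith [hq.trans hqη]
  have h_le : min gam kap / lam ≤ 49 * η ^ 2 := by
    linarith [(Real.sqrt_le_left (by positivity)).1 h_sqrt]
  rw [div_le_iff₀ hlam] at h_le
  rw [div_le_iff₀ (by positivity)]
  linarith
end

section
/- Let f : ℝ → ℝ be nonnegative and integrable with v ↦ v·f(v) also integrable, and let φ : (0,1) → ℝ be a function satisfying ∫_{φ(q)}^{∞} f(v) dv = q for every q ∈ (0,1) (i.e., φ is an inverse of the survival function of f). Then the valuation function V : (0,1) → ℝ defined by V(q) = ∫_{φ(q)}^{∞} v·f(v) dv is concave on (0,1). -/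
open MeasureTheory

/-- if `f` is a nonnegative integrable density with `v·f(v)`
integrable, and `φ` inverts the survival function of `f` on `(0,1)`
(i.e. `∫_{φ(q)}^∞ f = q`), then the valuation function
`V(q) = ∫_{φ(q)}^∞ v·f(v) dv` is concave on `(0,1)`. -/
theorem statement14 (f : ℝ → ℝ) (hf_nn : ∀ v, 0 ≤ f v)
    (hf_int : Integrable f) (hvf_int : Integrable (fun v => v * f v))
    (φ : ℝ → ℝ)
    (hφ : ∀ q ∈ Set.Ioo (0 : ℝ) 1, (∫ v in Set.Ioi (φ q), f v) = q) :
    ConcaveOn ℝ (Set.Ioo (0 : ℝ) 1) (fun q => ∫ v in Set.Ioi (φ q), v * f v) := by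
  set V : ℝ → ℝ := fun q => ∫ v in Set.Ioi (φ q), v * f v with hVdef
  -- φ is antitone on (0,1)
  have hφmono : ∀ p ∈ Set.Ioo (0:ℝ) 1, ∀ q ∈ Set.Ioo (0:ℝ) 1, p ≤ q → φ q ≤ φ p := by
    intro p hp q hq hpq
    by_contra h
    push_neg at h
    have hle : (∫ v in Set.Ioi (φ q), f v) ≤ ∫ v in Set.Ioi (φ p), f v :=
      setIntegral_mono_set hf_int.integrableOn
        (Filter.Eventually.of_forall hf_nn)
        (HasSubset.Subset.eventuallyLE (Set.Ioi_subset_Ioi h.le))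
    rw [hφ p hp, hφ q hq] at hle
    have : p = q := le_antisymm hpq hle
    rw [this] at h
    exact lt_irrefl _ h
  -- splitting an integral over Ioi a at b
  have split : ∀ g : ℝ → ℝ, Integrable g → ∀ a b : ℝ, a ≤ b →
      (∫ v in Set.Ioi a, g v) = (∫ v in Set.Ioc a b, g v) + ∫ v in Set.Ioi b, g v := by
    intro g hg a b hab
    rw [← setIntegral_union (Set.Ioc_disjoint_Ioi le_rfl) measurableSet_Ioi
        hg.integrableOn hg.integrableOn, Set.Ioc_union_Ioi_eq_Ioi hab]
  -- key two-sided estimate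
  have bounds : ∀ p ∈ Set.Ioo (0:ℝ) 1, ∀ q ∈ Set.Ioo (0:ℝ) 1, p ≤ q →
      φ q * (q - p) ≤ V q - V p ∧ V q - V p ≤ φ p * (q - p) := by
    intro p hp q hq hpq
    have hab : φ q ≤ φ p := hφmono p hp q hq hpq
    have hsf := split f hf_int (φ q) (φ p) hab
    have hsvf := split (fun v => v * f v) hvf_int (φ q) (φ p) hab
    rw [hφ q hq, hφ p hp] at hsf
    have hIf : (∫ v in Set.Ioc (φ q) (φ p), f v) = q - p := by linarith
    have hIvf : V q - V p = ∫ v in Set.Ioc (φ q) (φ p), v * f v := by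
      simp only [hVdef]; linarith
    have hlow : (∫ v in Set.Ioc (φ q) (φ p), φ q * f v)
        ≤ ∫ v in Set.Ioc (φ q) (φ p), v * f v := by
      apply setIntegral_mono_on (hf_int.integrableOn.const_mul _)
        hvf_int.integrableOn measurableSet_Ioc
      intro x hx
      exact mul_le_mul_of_nonneg_right hx.1.le (hf_nn x)
    have hhigh : (∫ v in Set.Ioc (φ q) (φ p), v * f v)
        ≤ ∫ v in Set.Ioc (φ q) (φ p), φ p * f v := by
      apply setIntegral_mono_on hvf_int.integrableOn
        (hf_int.integrableOn.const_mul _) measurableSet_Ioc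
      intro x hx
      exact mul_le_mul_of_nonneg_right hx.2 (hf_nn x)
    rw [integral_const_mul, hIf] at hlow
    rw [integral_const_mul, hIf] at hhigh
    rw [hIvf]
    exact ⟨hlow, hhigh⟩
  -- tangent-line inequality
  have key : ∀ p ∈ Set.Ioo (0:ℝ) 1, ∀ q ∈ Set.Ioo (0:ℝ) 1,
      V q ≤ V p + φ p * (q - p) := by
    intro p hp q hq
    rcases le_total p q with h | h
    · have := (bounds p hp q hq h).2
      linarith
    · have := (bounds q hq p hp h).1
      linarith
  constructor
  · exact convex_Ioo 0 1
  · intro x hx y hy a b ha hb hab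
    have hmem : a • x + b • y ∈ Set.Ioo (0:ℝ) 1 := (convex_Ioo 0 1) hx hy ha hb hab
    have h1 := key _ hmem x hx
    have h2 := key _ hmem y hy
    simp only [smul_eq_mul] at *
    have h3 : a * (x - (a * x + b * y)) + b * (y - (a * x + b * y)) = 0 := by
      linear_combination (-(a * x + b * y)) * hab
    calc a * V x + b * V y
        ≤ a * (V (a * x + b * y) + φ (a * x + b * y) * (x - (a * x + b * y)))
          + b * (V (a * x + b * y) + φ (a * x + b * y) * (y - (a * x + b * y))) :=
          add_le_add (mul_le_mul_of_nonneg_left h1 ha) (mul_le_mul_of_nonneg_left h2 hb)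
      _ = V (a * x + b * y) := by
          linear_combination (V (a * x + b * y)) * hab + (φ (a * x + b * y)) * h3
end
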